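/- Let A be a skew PBW extension over R with generators x_1,…,x_n. For each 1 ≤ i ≤ n there exist an injective ring endomorphism σ_i : R → R and a σ_i-derivation δ_i : R → R such that x_i·r = σ_i(r)·x_i + δ_i(r) for every r ∈ R. -/

import Mathlib

open scoped TensorProduct
open MulOpposite

noncomputable section

/-- The standard monomial `x₁^{α₁} ⋯ xₙ^{αₙ}` (ordered product). -/
def spbwMon {A : Type*} [Ring A] {n : ℕ} (x : Fin n → A) (α : Fin n → ℕ) : A :=
  (List.ofFn fun i => x i ^ α i).prod

/-- The set `R + R x₁ + ⋯ + R xₙ` inside `A`. -/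
def spbwSpan {R A : Type*} [Ring R] [Ring A] {n : ℕ} (ι : R →+* A) (x : Fin n → A) :
    Set A :=
  {a : A | ∃ (r₀ : R) (c : Fin n → R), a = ι r₀ + ∑ l, ι (c l) * x l}

/-- `A` is a skew PBW extension over `R` (embedded in `A` via `ι`) with
generators `x₁, …, xₙ`. -/
structure IsSkewPBWExtension {R A : Type*} [Ring R] [Ring A] {n : ℕ}
    (ι : R →+* A) (x : Fin n → A) : Prop where
  /-- (i) `R ⊆ A`. -/
  inj : Function.Injective ι
  /-- (ii) `A` is a free left `R`-module with basis the standard monomials. -/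
  repr_unique : ∀ f : A, ∃! c : (Fin n → ℕ) →₀ R,
    f = c.sum fun α r => ι r * spbwMon x α
  /-- (iii) `xᵢ r − c_{i,r} xᵢ ∈ R`. -/
  mul_coeff : ∀ (i : Fin n) (r : R), r ≠ 0 → ∃ c : R, c ≠ 0 ∧
    x i * ι r - ι c * x i ∈ Set.range ι
  /-- (iv) `xⱼ xᵢ − c_{i,j} xᵢ xⱼ ∈ R + R x₁ + ⋯ + R xₙ`. -/
  mul_gen : ∀ i j : Fin n, ∃ c : R, c ≠ 0 ∧
    x j * x i - ι c * (x i * x j) ∈ spbwSpan ι x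

/-- `δ` is a `σ`-derivation: additive and `δ(rs) = σ(r)δ(s) + δ(r)s`. -/
def IsSigmaDerivation {R : Type*} [Ring R] (σ : R → R) (δ : R → R) : Prop :=
  (∀ r s : R, δ (r + s) = δ r + δ s) ∧ ∀ r s : R, δ (r * s) = σ r * δ s + δ r * s

private lemma prod_ofFn_single {M : Type*} [Monoid M] :
    ∀ {n : ℕ} (f : Fin n → M) (i : Fin n), (∀ j, j ≠ i → f j = 1) →
      (List.ofFn f).prod = f i := by
  intro n
  induction n with
  | zero => exact fun f i => i.elim0
  | succ m ih =>
    intro f i hf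
    rw [List.ofFn_succ, List.prod_cons]
    rcases Fin.eq_zero_or_eq_succ i with rfl | ⟨k, rfl⟩
    · have h1 : ∀ j : Fin m, f j.succ = 1 := fun j => hf _ (Fin.succ_ne_zero j)
      have h2 : (List.ofFn fun j : Fin m => f j.succ).prod = 1 := by
        apply List.prod_eq_one
        intro y hy
        rw [List.mem_ofFn] at hy
        obtain ⟨j, rfl⟩ := hy
        exact h1 j
      rw [h2, mul_one]
    · rw [hf 0 (Ne.symm (Fin.succ_ne_zero k)), one_mul]
      exact ih _ k fun j hj => hf j.succ (by simpa using hj)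

private lemma spbwMon_zero {A : Type*} [Ring A] {n : ℕ} (x : Fin n → A) :
    spbwMon x 0 = 1 := by
  apply List.prod_eq_one
  intro y hy
  rw [List.mem_ofFn] at hy
  obtain ⟨j, rfl⟩ := hy
  simp

private lemma spbwMon_single {A : Type*} [Ring A] {n : ℕ} (x : Fin n → A) (i : Fin n) :
    spbwMon x (Pi.single i 1) = x i := by
  have := prod_ofFn_single (fun j => x j ^ (Pi.single i 1 : Fin n → ℕ) j) i
    (fun j hj => by simp [Pi.single_apply, hj])
  simpa [spbwMon] using this

private lemma pair_unique {R A : Type*} [Ring R] [Ring A] {n : ℕ}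
    (ι : R →+* A) (x : Fin n → A) (h : IsSkewPBWExtension ι x) (i : Fin n)
    {a b a' b' : R} (hab : ι a * x i + ι b = ι a' * x i + ι b') : a = a' ∧ b = b' := by
  set e : Fin n → ℕ := Pi.single i 1 with he_def
  have he : e ≠ 0 := by
    intro h0
    have := congrFun h0 i
    simp [he_def] at this
  have key : ∀ u v : R, (Finsupp.single e u + Finsupp.single 0 v).sum
      (fun α r => ι r * spbwMon x α) = ι u * x i + ι v := by
    intro u v
    rw [Finsupp.sum_add_index' (fun α => by simp) (fun α r s => by rw [map_add, add_mul]),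
        Finsupp.sum_single_index (by simp), Finsupp.sum_single_index (by simp),
        he_def, spbwMon_single, spbwMon_zero, mul_one]
  obtain ⟨c, hc, huniq⟩ := h.repr_unique (ι a * x i + ι b)
  have h1 : Finsupp.single e a + Finsupp.single 0 b = c := huniq _ (key a b).symm
  have h2 : Finsupp.single e a' + Finsupp.single 0 b' = c :=
    huniq _ (by rw [hab]; exact (key a' b').symm)
  have heq := h1.trans h2.symm
  constructor
  · have := congrArg (fun c => c e) heq
    simpa [Finsupp.single_apply, he, Ne.symm he] using this
  · have := congrArg (fun c => c 0) heq
    simpa [Finsupp.single_apply, he, Ne.symm he] using this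

/-- Let `A` be a skew PBW extension over `R` with generators
`x₁,…,xₙ`. For each `i` there exist an injective ring endomorphism
`σᵢ : R → R` and a `σᵢ`-derivation `δᵢ : R → R` such that
`xᵢ·r = σᵢ(r)·xᵢ + δᵢ(r)` for every `r ∈ R`. -/
theorem exists_sigma_delta {R A : Type*} [Ring R] [Ring A] {n : ℕ}
    (ι : R →+* A) (x : Fin n → A) (h : IsSkewPBWExtension ι x) :
    ∀ i : Fin n, ∃ σ : R →+* R, Function.Injective σ ∧
      ∃ δ : R → R, IsSigmaDerivation σ δ ∧
        ∀ r : R, x i * ι r = ι (σ r) * x i + ι (δ r) := by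
  intro i
  have ex : ∀ r : R, ∃ p : R × R, x i * ι r = ι p.1 * x i + ι p.2 := by
    intro r
    by_cases hr : r = 0
    · exact ⟨(0, 0), by simp [hr]⟩
    · obtain ⟨c, hc, d, hd⟩ := h.mul_coeff i r hr
      exact ⟨(c, d), by rw [hd]; abel⟩
  choose F hF using ex
  set σ₀ : R → R := fun r => (F r).1 with hσ₀
  set δ₀ : R → R := fun r => (F r).2 with hδ₀
  have hadd : ∀ r s : R, σ₀ (r + s) = σ₀ r + σ₀ s ∧ δ₀ (r + s) = δ₀ r + δ₀ s := by
    intro r s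
    refine pair_unique ι x h i ((hF (r + s)).symm.trans ?_)
    rw [map_add, mul_add, hF r, hF s, map_add, map_add, add_mul]
    abel
  have hmul : ∀ r s : R, σ₀ (r * s) = σ₀ r * σ₀ s ∧ δ₀ (r * s) = σ₀ r * δ₀ s + δ₀ r * s := by
    intro r s
    refine pair_unique ι x h i ((hF (r * s)).symm.trans ?_)
    rw [map_mul, ← mul_assoc, hF r, add_mul, mul_assoc, hF s, map_mul, map_add,
      map_mul, map_mul]
    noncomm_ring
  have hone : σ₀ 1 = 1 ∧ δ₀ 1 = 0 := by
    refine pair_unique ι x h i ((hF 1).symm.trans ?_)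
    simp
  have hzero : σ₀ 0 = 0 ∧ δ₀ 0 = 0 := by
    refine pair_unique ι x h i ((hF 0).symm.trans ?_)
    simp
  have hker : ∀ r : R, σ₀ r = 0 → r = 0 := by
    intro r hr0
    by_contra hr
    obtain ⟨c, hc, d, hd⟩ := h.mul_coeff i r hr
    have heq : ι (σ₀ r) * x i + ι (δ₀ r) = ι c * x i + ι d := by
      rw [← hF r, hd]; abel
    exact hc (((pair_unique ι x h i heq).1.symm.trans hr0))
  refine ⟨{ toFun := σ₀, map_one' := hone.1, map_mul' := fun r s => (hmul r s).1,
            map_zero' := hzero.1, map_add' := fun r s => (hadd r s).1 }, ?_, δ₀,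
          ⟨fun r s => (hadd r s).2, fun r s => (hmul r s).2⟩, hF⟩
  intro a b hab
  have hab' : σ₀ a = σ₀ b := hab
  have hsub : σ₀ (a - b) = 0 := by
    have h1 := (hadd (a - b) b).1
    rw [sub_add_cancel] at h1
    have h3 : σ₀ (a - b) + σ₀ b = 0 + σ₀ b := by rw [← h1, hab', zero_add]
    exact add_right_cancel h3
  exact sub_eq_zero.mp (hker _ hsub)
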